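/- Let p > 2, q = p/(p−1), δ > 0, and Q the Nazarov–Treil function. There is a constant C = C(p,δ) > 0 such that for all (ζ,η) ∈ ℝ²×ℝ²: 0 ≤ Q(ζ,η) ≤ C(|ζ|^p + |η|^q), |∂_ζ Q(ζ,η)| ≤ C·max{|ζ|^{p−1}, |η|}, and |∂_η Q(ζ,η)| ≤ C|η|^{q−1}, where ∂_ζ = (∂_{ζ₁} − i∂_{ζ₂})/2 and ∂_η = (∂_{η₁} − i∂_{η₂})/2. -/

import Mathlib

/-!
`Q` depends only on `s = ‖ζ‖` and `t = ‖η‖`, and since `(p - 1)(q - 1) = 1` its first branch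
`s ^ p ≤ t ^ q` is the region `s ≤ t ^ (q - 1)`, where `s² t^(2-q) ≤ t ^ q`; this gives the size
bounds. Each branch is differentiable where it is used, with derivative `a ⟪ζ, ·⟫ + b ⟪η, ·⟫`;
on the interface `s = t ^ (q - 1)` the two branches have equal values and equal derivatives, and
at the origin `0 ≤ Q ≤ (1 + δ)(s ^ p + t ^ q)` forces the derivative `0`. Using `s ≤ t ^ (q - 1)`
once more, `|a| s ≲ max (s ^ (p - 1)) t` and `|b| t ≲ t ^ (q - 1)`, and these bound the Wirtinger
derivatives.
-/

/-- The Nazarov–Treil Bellman function on `ℝ² × ℝ²`. -/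
noncomputable def NTQ (p q δ : ℝ)
    (w : EuclideanSpace ℝ (Fin 2) × EuclideanSpace ℝ (Fin 2)) : ℝ :=
  ‖w.1‖ ^ p + ‖w.2‖ ^ q +
    δ * (if ‖w.1‖ ^ p ≤ ‖w.2‖ ^ q then ‖w.1‖ ^ (2 : ℝ) * ‖w.2‖ ^ (2 - q)
      else (2 / p) * ‖w.1‖ ^ p + (2 / q - 1) * ‖w.2‖ ^ q)

open Real

namespace Real.HolderConjugate

variable {p q : ℝ} (hpq : p.HolderConjugate q)
include hpq

lemma conj_sub_one_mul : (q - 1) * p = q := by linear_combination hpq.mul_eq_add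

lemma conj_le_two (hp : 2 ≤ p) : q ≤ 2 := by
  have := hpq.sub_one_mul_conj
  nlinarith [hpq.symm.pos]

lemma rpow_conj_sub_one_rpow {t : ℝ} (ht : 0 ≤ t) : (t ^ (q - 1)) ^ p = t ^ q := by
  rw [← rpow_mul ht, hpq.conj_sub_one_mul]

lemma rpow_le_rpow_iff_le_rpow_sub_one {s t : ℝ} (hs : 0 ≤ s) (ht : 0 ≤ t) :
    s ^ p ≤ t ^ q ↔ s ≤ t ^ (q - 1) := by
  rw [← hpq.rpow_conj_sub_one_rpow ht, rpow_le_rpow_iff hs (by positivity) hpq.pos]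

lemma rpow_eq_rpow_iff_eq_rpow_sub_one {s t : ℝ} (hs : 0 ≤ s) (ht : 0 ≤ t) :
    s ^ p = t ^ q ↔ s = t ^ (q - 1) := by
  rw [← hpq.rpow_conj_sub_one_rpow ht, rpow_left_inj hs (by positivity) hpq.ne_zero]

end Real.HolderConjugate

lemma rpow_sub_two_mul_self {x r : ℝ} (hx : 0 ≤ x) (hr : r ≠ 1) :
    x ^ (r - 2) * x = x ^ (r - 1) := by
  rw [← rpow_add_one' hx (by contrapose! hr; linarith)]
  ring_nf

lemma rpow_two_mul_rpow_le_of_le_rpow {r s t x : ℝ} (hs : 0 ≤ s) (ht : 0 ≤ t) (hst : s ≤ t ^ r)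
    (hx : r * 2 + x ≠ 0) : s ^ (2 : ℝ) * t ^ x ≤ t ^ (r * 2 + x) :=
  calc s ^ (2 : ℝ) * t ^ x ≤ (t ^ r) ^ (2 : ℝ) * t ^ x := by gcongr
    _ = t ^ (r * 2 + x) := by rw [← rpow_mul ht, ← rpow_add' ht hx]

noncomputable def ntProfile (p q δ s t : ℝ) : ℝ :=
  s ^ p + t ^ q +
    δ * (if s ^ p ≤ t ^ q then s ^ (2 : ℝ) * t ^ (2 - q)
      else (2 / p) * s ^ p + (2 / q - 1) * t ^ q)

noncomputable def mixedPiece (p q δ s t : ℝ) : ℝ :=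
  s ^ p + t ^ q + δ * (s ^ (2 : ℝ) * t ^ (2 - q))

noncomputable def powerPiece (p q δ s t : ℝ) : ℝ :=
  s ^ p + t ^ q + δ * ((2 / p) * s ^ p + (2 / q - 1) * t ^ q)

section profile

variable {p q δ s t : ℝ}

lemma ntProfile_of_le (h : s ^ p ≤ t ^ q) : ntProfile p q δ s t = mixedPiece p q δ s t := by
  rw [ntProfile, if_pos h, mixedPiece]

lemma ntProfile_of_lt (h : t ^ q < s ^ p) : ntProfile p q δ s t = powerPiece p q δ s t := by
  rw [ntProfile, if_neg h.not_ge, powerPiece]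

lemma mixedPiece_eq_powerPiece (hpq : p.HolderConjugate q) (hs : 0 ≤ s) (ht : 0 ≤ t)
    (h : s ^ p = t ^ q) : mixedPiece p q δ s t = powerPiece p q δ s t := by
  have hst : s ^ (2 : ℝ) * t ^ (2 - q) = t ^ q := by
    rw [(hpq.rpow_eq_rpow_iff_eq_rpow_sub_one hs ht).1 h, ← rpow_mul ht,
      ← rpow_add' ht (by linarith [hpq.symm.pos])]
    ring_nf
  have hsum : 2 / p + (2 / q - 1) = 1 := by linear_combination 2 * hpq.inv_add_inv_eq_one
  rw [mixedPiece, powerPiece, hst, h]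
  linear_combination δ * t ^ q * hsum.symm

variable (hpq : p.HolderConjugate q) (hp : 2 ≤ p) (hδ : 0 ≤ δ) (hs : 0 ≤ s) (ht : 0 ≤ t)
include hpq hp hδ hs ht

lemma ntProfile_nonneg : 0 ≤ ntProfile p q δ s t := by
  have : 1 ≤ 2 / q := by rw [le_div_iff₀ hpq.symm.pos]; linarith [hpq.conj_le_two hp]
  rw [ntProfile]
  split_ifs <;> positivity

lemma ntProfile_le : ntProfile p q δ s t ≤ (1 + δ) * (s ^ p + t ^ q) := by
  have hsp : 0 ≤ s ^ p := by positivity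
  have htq : 0 ≤ t ^ q := by positivity
  by_cases h : s ^ p ≤ t ^ q
  · have hst : s ^ (2 : ℝ) * t ^ (2 - q) ≤ t ^ q := by
      convert rpow_two_mul_rpow_le_of_le_rpow hs ht
        ((hpq.rpow_le_rpow_iff_le_rpow_sub_one hs ht).1 h) (x := 2 - q)
        (by linarith [hpq.symm.pos]) using 2
      ring
    rw [ntProfile_of_le h, mixedPiece]
    nlinarith
  · have h2p : 2 / p ≤ 1 := by rw [div_le_one (by linarith)]; exact hp
    have h2q : 2 / q ≤ 2 := by rw [div_le_iff₀ hpq.symm.pos]; linarith [hpq.symm.lt]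
    rw [ntProfile_of_lt (not_le.1 h), powerPiece]
    nlinarith [mul_le_mul_of_nonneg_right h2p hsp, mul_le_mul_of_nonneg_right h2q htq]

end profile

section coefficients

variable {p q δ s t : ℝ} (hpq : p.HolderConjugate q) (hp : 2 ≤ p) (hδ : 0 ≤ δ) (hs : 0 ≤ s)
  (ht : 0 ≤ t)
include hpq hp hδ hs ht

lemma mixed_coeffs_le (hst : s ≤ t ^ (q - 1)) :
    |p * s ^ (p - 2) + 2 * δ * t ^ (2 - q)| * s ≤ (p + q + 2 * δ) * max (s ^ (p - 1)) t ∧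
      |q * t ^ (q - 2) + δ * (2 - q) * s ^ (2 : ℝ) * t ^ (-q)| * t ≤
        (p + q + 2 * δ) * t ^ (q - 1) := by
  have hq1 := hpq.symm.lt
  have hδq : 0 ≤ δ * (2 - q) := mul_nonneg hδ (by linarith [hpq.conj_le_two hp])
  have hts : t ^ (2 - q) * s ≤ t := by
    calc t ^ (2 - q) * s ≤ t ^ (2 - q) * t ^ (q - 1) := by gcongr
      _ = t := by rw [← rpow_add' ht (by linarith)]; norm_num
  have hst2 : s ^ (2 : ℝ) * t ^ (-q) * t ≤ t ^ (q - 1) := by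
    rw [mul_assoc, ← rpow_add_one' ht (by linarith)]
    convert rpow_two_mul_rpow_le_of_le_rpow hs ht hst (x := -q + 1) (by linarith) using 2
    ring
  constructor
  · rw [abs_of_nonneg (by positivity)]
    calc (p * s ^ (p - 2) + 2 * δ * t ^ (2 - q)) * s
        = p * (s ^ (p - 2) * s) + 2 * δ * (t ^ (2 - q) * s) := by ring
      _ ≤ p * s ^ (p - 1) + 2 * δ * t := by
        rw [rpow_sub_two_mul_self hs (by linarith)]; gcongr
      _ ≤ (p + q + 2 * δ) * max (s ^ (p - 1)) t := by
        nlinarith [le_max_left (s ^ (p - 1)) t, le_max_right (s ^ (p - 1)) t]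
  · rw [abs_of_nonneg (by positivity)]
    calc (q * t ^ (q - 2) + δ * (2 - q) * s ^ (2 : ℝ) * t ^ (-q)) * t
        = q * (t ^ (q - 2) * t) + δ * (2 - q) * (s ^ (2 : ℝ) * t ^ (-q) * t) := by ring
      _ ≤ (q + δ * (2 - q)) * t ^ (q - 1) := by
        rw [rpow_sub_two_mul_self ht (by linarith)]; nlinarith
      _ ≤ (p + q + 2 * δ) * t ^ (q - 1) := by gcongr ?_ * _; nlinarith

lemma power_coeffs_le :
    |(p + 2 * δ) * s ^ (p - 2)| * s ≤ (p + q + 2 * δ) * max (s ^ (p - 1)) t ∧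
      |(q + δ * (2 - q)) * t ^ (q - 2)| * t ≤ (p + q + 2 * δ) * t ^ (q - 1) := by
  have hq1 := hpq.symm.lt
  have hδq : 0 ≤ δ * (2 - q) := mul_nonneg hδ (by linarith [hpq.conj_le_two hp])
  constructor
  · rw [abs_of_nonneg (by positivity), mul_assoc, rpow_sub_two_mul_self hs (by linarith)]
    gcongr
    · linarith
    · exact le_max_left _ _
  · rw [abs_of_nonneg (by positivity), mul_assoc, rpow_sub_two_mul_self ht (by linarith)]
    gcongr ?_ * _
    nlinarith

end coefficients

section derivatives

open Asymptotics ContinuousLinearMap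

variable {E : Type*} [NormedAddCommGroup E] [InnerProductSpace ℝ E]

lemma hasFDerivAt_norm_rpow_of_ne_zero {x : E} (hx : x ≠ 0) (r : ℝ) :
    HasFDerivAt (fun x : E ↦ ‖x‖ ^ r) ((r * ‖x‖ ^ (r - 2)) • innerSL ℝ x) x := by
  apply HasStrictFDerivAt.hasFDerivAt
  convert (hasStrictFDerivAt_norm_sq x).rpow_const (p := r / 2) (by simp [hx]) using 0
  simp_rw [← rpow_natCast_mul (norm_nonneg _), ← Nat.cast_smul_eq_nsmul ℝ, smul_smul]
  ring_nf

variable {p q δ : ℝ}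

lemma hasFDerivAt_mixedPiece (hp : 1 < p) (ζ : E) {η : E} (hη : η ≠ 0) :
    HasFDerivAt (fun w : E × E ↦ mixedPiece p q δ ‖w.1‖ ‖w.2‖)
      (((p * ‖ζ‖ ^ (p - 2) + 2 * δ * ‖η‖ ^ (2 - q)) • innerSL ℝ ζ).coprod
        ((q * ‖η‖ ^ (q - 2) + δ * (2 - q) * ‖ζ‖ ^ (2 : ℝ) * ‖η‖ ^ (-q)) • innerSL ℝ η))
      (ζ, η) := by
  have hs := fun r (hr : 1 < r) ↦ (hasFDerivAt_norm_rpow ζ hr).comp (ζ, η)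
    (hasFDerivAt_fst (𝕜 := ℝ) (E := E) (F := E))
  have ht := fun r ↦ (hasFDerivAt_norm_rpow_of_ne_zero hη r).comp (ζ, η)
    (hasFDerivAt_snd (𝕜 := ℝ) (E := E) (F := E))
  refine (((hs p hp).add (ht q)).add
    (((hs 2 one_lt_two).mul (ht (2 - q))).const_mul δ)).congr_fderiv ?_
  ext v <;>
  · simp only [smul_comp, rpow_ofNat, Function.comp_apply, sub_sub_cancel_left, sub_self, rpow_zero,
      mul_one, smul_add, add_comp, add_apply, smul_apply, comp_apply, inl_apply, inr_apply,
      coe_fst', coe_snd', coe_innerSL_apply, smul_eq_mul, inner_zero_right, mul_zero, add_zero,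
      zero_add, coprod_comp_inl, coprod_comp_inr]
    ring_nf

lemma hasFDerivAt_powerPiece (hp : 1 < p) (hq : 1 < q) (ζ η : E) :
    HasFDerivAt (fun w : E × E ↦ powerPiece p q δ ‖w.1‖ ‖w.2‖)
      ((((p + 2 * δ) * ‖ζ‖ ^ (p - 2)) • innerSL ℝ ζ).coprod
        (((q + δ * (2 - q)) * ‖η‖ ^ (q - 2)) • innerSL ℝ η)) (ζ, η) := by
  have hs := (hasFDerivAt_norm_rpow ζ hp).comp (ζ, η) (hasFDerivAt_fst (𝕜 := ℝ) (E := E) (F := E))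
  have ht := (hasFDerivAt_norm_rpow η hq).comp (ζ, η) (hasFDerivAt_snd (𝕜 := ℝ) (E := E) (F := E))
  refine ((hs.add ht).add (((hs.const_mul (2 / p)).add
    (ht.const_mul (2 / q - 1))).const_mul δ)).congr_fderiv ?_
  ext v <;>
  · simp only [smul_comp, smul_add, add_comp, add_apply, smul_apply, comp_apply, inl_apply,
      inr_apply, coe_fst', coe_snd', coe_innerSL_apply, smul_eq_mul, inner_zero_right, mul_zero,
      add_zero, zero_add, coprod_comp_inl, coprod_comp_inr]
    field_simp

lemma hasFDerivAt_zero_of_abs_le {F : Type*} [NormedAddCommGroup F] [NormedSpace ℝ F]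
    {f g : F → ℝ} {x : F} (hg : HasFDerivAt g (0 : F →L[ℝ] ℝ) x) (hfx : f x = 0) (hgx : g x = 0)
    (hfg : ∀ y, |f y| ≤ g y) : HasFDerivAt f (0 : F →L[ℝ] ℝ) x := by
  rw [hasFDerivAt_iff_isLittleO_nhds_zero] at hg ⊢
  simp only [hfx, hgx, zero_apply, sub_zero] at hg ⊢
  exact (isBigO_of_le _ fun v ↦ (hfg _).trans (le_abs_self _)).trans_isLittleO hg

noncomputable def ntBellman (p q δ : ℝ) (w : E × E) : ℝ := ntProfile p q δ ‖w.1‖ ‖w.2‖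

lemma hasFDerivAt_ntBellman_of_lt (hp : 1 < p) (hq : 0 < q) {ζ η : E}
    (h : ‖ζ‖ ^ p < ‖η‖ ^ q) :
    HasFDerivAt (ntBellman p q δ)
      (((p * ‖ζ‖ ^ (p - 2) + 2 * δ * ‖η‖ ^ (2 - q)) • innerSL ℝ ζ).coprod
        ((q * ‖η‖ ^ (q - 2) + δ * (2 - q) * ‖ζ‖ ^ (2 : ℝ) * ‖η‖ ^ (-q)) • innerSL ℝ η))
      (ζ, η) := by
  have hη : η ≠ 0 := by
    rintro rfl
    rw [norm_zero, zero_rpow hq.ne'] at h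
    exact h.not_ge (by positivity)
  have hU : IsOpen {w : E × E | ‖w.1‖ ^ p < ‖w.2‖ ^ q} :=
    isOpen_lt (continuous_fst.norm.rpow_const fun _ ↦ .inr (by linarith))
      (continuous_snd.norm.rpow_const fun _ ↦ .inr hq.le)
  refine (hasFDerivAt_mixedPiece hp ζ hη).congr_of_eventuallyEq ?_
  filter_upwards [hU.mem_nhds h] with w hw using ntProfile_of_le hw.le

lemma hasFDerivAt_ntBellman_of_eq (hpq : p.HolderConjugate q) {ζ η : E} (hη : η ≠ 0)
    (h : ‖ζ‖ ^ p = ‖η‖ ^ q) :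
    HasFDerivAt (ntBellman p q δ)
      ((((p + 2 * δ) * ‖ζ‖ ^ (p - 2)) • innerSL ℝ ζ).coprod
        (((q + δ * (2 - q)) * ‖η‖ ^ (q - 2)) • innerSL ℝ η)) (ζ, η) := by
  have ht : 0 < ‖η‖ := norm_pos_iff.2 hη
  have hs : ‖ζ‖ = ‖η‖ ^ (q - 1) :=
    (hpq.rpow_eq_rpow_iff_eq_rpow_sub_one (norm_nonneg _) ht.le).1 h
  have ha : p * ‖ζ‖ ^ (p - 2) + 2 * δ * ‖η‖ ^ (2 - q) = (p + 2 * δ) * ‖ζ‖ ^ (p - 2) := by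
    have : ‖ζ‖ ^ (p - 2) = ‖η‖ ^ (2 - q) := by
      rw [hs, ← rpow_mul ht.le]
      congr 1
      linear_combination hpq.mul_eq_add
    rw [this]; ring
  have hb : q * ‖η‖ ^ (q - 2) + δ * (2 - q) * ‖ζ‖ ^ (2 : ℝ) * ‖η‖ ^ (-q)
      = (q + δ * (2 - q)) * ‖η‖ ^ (q - 2) := by
    have : ‖ζ‖ ^ (2 : ℝ) * ‖η‖ ^ (-q) = ‖η‖ ^ (q - 2) := by
      rw [hs, ← rpow_mul ht.le, ← rpow_add ht]
      ring_nf
    linear_combination δ * (2 - q) * this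
  have hmixed := hasFDerivAt_mixedPiece (q := q) (δ := δ) hpq.lt ζ hη
  rw [ha, hb] at hmixed
  have hpower := hasFDerivAt_powerPiece (δ := δ) hpq.lt hpq.symm.lt ζ η
  rw [← hasFDerivWithinAt_univ,
    ← Set.union_compl_self {w : E × E | ‖w.1‖ ^ p ≤ ‖w.2‖ ^ q}]
  refine (hmixed.hasFDerivWithinAt.congr (fun w hw ↦ ntProfile_of_le hw)
    (ntProfile_of_le h.le)).union (hpower.hasFDerivWithinAt.congr
      (fun w hw ↦ ntProfile_of_lt (not_le.1 hw)) ?_)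
  change ntProfile p q δ ‖ζ‖ ‖η‖ = _
  rw [ntProfile_of_le h.le]
  exact mixedPiece_eq_powerPiece hpq (norm_nonneg _) ht.le h

lemma hasFDerivAt_ntBellman_zero (hpq : p.HolderConjugate q) (hp : 2 ≤ p) (hδ : 0 ≤ δ) :
    HasFDerivAt (ntBellman p q δ) (0 : E × E →L[ℝ] ℝ) 0 := by
  have hs := (hasFDerivAt_norm_rpow (0 : E) hpq.lt).comp (0 : E × E)
    (hasFDerivAt_fst (𝕜 := ℝ) (E := E) (F := E))
  have ht := (hasFDerivAt_norm_rpow (0 : E) hpq.symm.lt).comp (0 : E × E)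
    (hasFDerivAt_snd (𝕜 := ℝ) (E := E) (F := E))
  refine hasFDerivAt_zero_of_abs_le (((hs.add ht).const_mul (1 + δ)).congr_fderiv (by simp)) ?_ ?_
    fun w ↦ ?_
  · simp [ntBellman, ntProfile, zero_rpow hpq.ne_zero, zero_rpow hpq.symm.ne_zero]
  · simp [zero_rpow hpq.ne_zero, zero_rpow hpq.symm.ne_zero]
  · change |ntProfile p q δ ‖w.1‖ ‖w.2‖| ≤ (1 + δ) * (‖w.1‖ ^ p + ‖w.2‖ ^ q)
    rw [abs_of_nonneg (ntProfile_nonneg hpq hp hδ (norm_nonneg _) (norm_nonneg _))]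
    exact ntProfile_le hpq hp hδ (norm_nonneg _) (norm_nonneg _)

lemma hasFDerivAt_ntBellman_of_le (hpq : p.HolderConjugate q) (hp : 2 ≤ p) (hδ : 0 ≤ δ)
    {ζ η : E} (h : ‖η‖ ^ q ≤ ‖ζ‖ ^ p) :
    HasFDerivAt (ntBellman p q δ)
      ((((p + 2 * δ) * ‖ζ‖ ^ (p - 2)) • innerSL ℝ ζ).coprod
        (((q + δ * (2 - q)) * ‖η‖ ^ (q - 2)) • innerSL ℝ η)) (ζ, η) := by
  rcases h.lt_or_eq with hlt | heq
  · have hU : IsOpen {w : E × E | ‖w.2‖ ^ q < ‖w.1‖ ^ p} :=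
      isOpen_lt (continuous_snd.norm.rpow_const fun _ ↦ .inr hpq.symm.nonneg)
        (continuous_fst.norm.rpow_const fun _ ↦ .inr hpq.nonneg)
    refine (hasFDerivAt_powerPiece hpq.lt hpq.symm.lt ζ η).congr_of_eventuallyEq ?_
    filter_upwards [hU.mem_nhds hlt] with w hw using ntProfile_of_lt hw
  · by_cases hη : η = 0
    · have hζ : ζ = 0 := by
        rw [hη, norm_zero, zero_rpow hpq.symm.ne_zero, eq_comm,
          rpow_eq_zero (norm_nonneg _) hpq.ne_zero, norm_eq_zero] at heq
        exact heq
      subst hζ hη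
      rw [Prod.mk_zero_zero]
      convert hasFDerivAt_ntBellman_zero (E := E) hpq hp hδ
      ext <;> simp
    · exact hasFDerivAt_ntBellman_of_eq hpq hη heq.symm

theorem exists_hasFDerivAt_ntBellman (hpq : p.HolderConjugate q) (hp : 2 ≤ p) (hδ : 0 ≤ δ)
    (ζ η : E) :
    ∃ f' g' : E →L[ℝ] ℝ, HasFDerivAt (ntBellman p q δ) (f'.coprod g') (ζ, η) ∧
      ‖f'‖ ≤ (p + q + 2 * δ) * max (‖ζ‖ ^ (p - 1)) ‖η‖ ∧
      ‖g'‖ ≤ (p + q + 2 * δ) * ‖η‖ ^ (q - 1) := by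
  rcases lt_or_ge (‖ζ‖ ^ p) (‖η‖ ^ q) with h | h
  · refine ⟨_, _, hasFDerivAt_ntBellman_of_lt hpq.lt hpq.symm.pos h, ?_⟩
    simp only [norm_smul, innerSL_apply_norm, Real.norm_eq_abs]
    exact mixed_coeffs_le hpq hp hδ (norm_nonneg _) (norm_nonneg _)
      ((hpq.rpow_le_rpow_iff_le_rpow_sub_one (norm_nonneg _) (norm_nonneg _)).1 h.le)
  · refine ⟨_, _, hasFDerivAt_ntBellman_of_le hpq hp hδ h, ?_⟩
    simp only [norm_smul, innerSL_apply_norm, Real.norm_eq_abs]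
    exact power_coeffs_le hpq hp hδ (norm_nonneg _) (norm_nonneg _)

end derivatives

lemma norm_ofReal_sub_I_mul_ofReal_div_two_le {x y K : ℝ} (hx : |x| ≤ K) (hy : |y| ≤ K) :
    ‖((x : ℂ) - Complex.I * y) / 2‖ ≤ K := by
  rw [norm_div, Complex.norm_two, div_le_iff₀ two_pos]
  calc ‖(x : ℂ) - Complex.I * y‖ ≤ |x| + |y| := by
        simpa using Complex.norm_le_abs_re_add_abs_im ((x : ℂ) - Complex.I * y)
    _ ≤ K * 2 := by linarith

/-- size estimates for `Q` and its Wirtinger-type partial derivatives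
`∂_ζ Q = (∂_{ζ₁}Q − i∂_{ζ₂}Q)/2` and `∂_η Q = (∂_{η₁}Q − i∂_{η₂}Q)/2`. -/
theorem stmt17 (p q δ : ℝ) (hp : 2 < p) (hq : q = p / (p - 1)) (hδ : 0 < δ) :
    ∃ C > 0, ∀ ζ η : EuclideanSpace ℝ (Fin 2),
      0 ≤ NTQ p q δ (ζ, η) ∧
      NTQ p q δ (ζ, η) ≤ C * (‖ζ‖ ^ p + ‖η‖ ^ q) ∧
      ‖(((fderiv ℝ (NTQ p q δ) (ζ, η) (EuclideanSpace.single 0 1, 0) : ℝ) : ℂ) -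
          Complex.I * ((fderiv ℝ (NTQ p q δ) (ζ, η) (EuclideanSpace.single 1 1, 0) : ℝ) : ℂ)) / 2‖
        ≤ C * max (‖ζ‖ ^ (p - 1)) ‖η‖ ∧
      ‖(((fderiv ℝ (NTQ p q δ) (ζ, η) (0, EuclideanSpace.single 0 1) : ℝ) : ℂ) -
          Complex.I * ((fderiv ℝ (NTQ p q δ) (ζ, η) (0, EuclideanSpace.single 1 1) : ℝ) : ℂ)) / 2‖
        ≤ C * ‖η‖ ^ (q - 1) := by
  have hpq : p.HolderConjugate q := (holderConjugate_iff_eq_conjExponent (by linarith)).2 hq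
  refine ⟨p + q + 2 * δ, by linarith [hpq.symm.pos], fun ζ η ↦ ?_⟩
  obtain ⟨f', g', hQ, hf', hg'⟩ := exists_hasFDerivAt_ntBellman hpq hp.le hδ.le ζ η
  -- `NTQ p q δ` unfolds to `ntBellman p q δ` on `ℝ² × ℝ²`.
  have hfderiv : fderiv ℝ (NTQ p q δ) (ζ, η) = f'.coprod g' := hQ.fderiv
  have hunit (L : EuclideanSpace ℝ (Fin 2) →L[ℝ] ℝ) (i : Fin 2) :
      |L (EuclideanSpace.single i 1)| ≤ ‖L‖ := by
    simpa using L.le_opNorm (EuclideanSpace.single i 1)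
  refine ⟨ntProfile_nonneg hpq hp.le hδ.le (norm_nonneg _) (norm_nonneg _),
    (ntProfile_le hpq hp.le hδ.le (norm_nonneg _) (norm_nonneg _)).trans ?_, ?_, ?_⟩
  · gcongr ?_ * _
    linarith [hpq.symm.pos]
  · simp only [hfderiv, ContinuousLinearMap.coprod_apply, map_zero, add_zero]
    exact norm_ofReal_sub_I_mul_ofReal_div_two_le ((hunit f' 0).trans hf') ((hunit f' 1).trans hf')
  · simp only [hfderiv, ContinuousLinearMap.coprod_apply, map_zero, zero_add]
    exact norm_ofReal_sub_I_mul_ofReal_div_two_le ((hunit g' 0).trans hg') ((hunit g' 1).trans hg')
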